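/- arXiv:2304.13446 — 4 statements merged into one kernel-verified Lean document; each statement's English description precedes it below -/
import Mathlib

section
/- Let ω₁ and ω₂ be real numbers with ω₂ ≠ 0 such that ω₁/ω₂ is irrational, and let m, n, m′, n′ be integers with (m, n) ≠ (m′, n′) and (m, n) ≠ (−m′, −n′). Then (2/T)·∫₀^T sin((m ω₁ + n ω₂) t)·sin((m′ ω₁ + n′ ω₂) t) dt tends to 0 as T → ∞ (T ranging over positive real numbers). -/
open Real Filter

lemma aux_ne (ω₁ ω₂ : ℝ) (hω₂ : ω₂ ≠ 0) (hirr : Irrational (ω₁ / ω₂))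
    (p q : ℤ) (h : (p, q) ≠ (0, 0)) : (p : ℝ) * ω₁ + q * ω₂ ≠ 0 := by
  intro hc
  rcases eq_or_ne p 0 with hp | hp
  · subst hp
    simp at hc
    rcases hc with hc | hc
    · exact h (by simp [hc])
    · exact hω₂ hc
  · have hpR : (p : ℝ) ≠ 0 := Int.cast_ne_zero.mpr hp
    have : ω₁ / ω₂ = ((-q : ℤ) : ℝ) / (p : ℝ) := by
      push_cast
      field_simp
      linarith [hc]
    exact hirr ⟨(-q : ℚ) / p, by rw [this]; push_cast; ring⟩

lemma aux_tendsto (c : ℝ) (hc : c ≠ 0) :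
    Tendsto (fun T : ℝ => (1 / T) * ∫ t in (0:ℝ)..T, Real.cos (c * t))
      atTop (nhds 0) := by
  have heq : ∀ T : ℝ, (∫ t in (0:ℝ)..T, Real.cos (c * t)) = Real.sin (c * T) / c := by
    intro T
    rw [intervalIntegral.integral_comp_mul_left (fun x => Real.cos x) hc]
    simp [integral_cos, div_eq_inv_mul]
  simp only [heq]
  have h1 : Tendsto (fun T : ℝ => (1 / |c|) * (1 / T)) atTop (nhds 0) := by
    simpa using (tendsto_inv_atTop_zero.const_mul (1 / |c|)).congr
      (fun T => by rw [one_div])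
  apply squeeze_zero_norm' _ h1
  filter_upwards [eventually_gt_atTop (0 : ℝ)] with T hT
  rw [norm_mul, Real.norm_eq_abs, Real.norm_eq_abs, abs_of_pos (by positivity : (0:ℝ) < 1/T),
    mul_comm ((1:ℝ)/|c|)]
  refine mul_le_mul_of_nonneg_left ?_ (by positivity)
  rw [abs_div]
  gcongr; exacts [abs_sin_le_one _]

lemma sin_mul_sin_eq (x y : ℝ) :
    Real.sin x * Real.sin y = (Real.cos (x - y) - Real.cos (x + y)) / 2 := by
  rw [Real.cos_sub, Real.cos_add]; ring

/-- Theorem 1 (sine–sine off-diagonal part): if `ω₂ ≠ 0`, `ω₁/ω₂` is irrational,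
and `(m, n) ≠ (m', n')`, `(m, n) ≠ (-m', -n')`, then
`(2/T) ∫₀^T sin((m ω₁ + n ω₂) t) sin((m' ω₁ + n' ω₂) t) dt → 0` as `T → ∞`. -/
theorem MHB_offdiag_sin_sin_tendsto_zero (ω₁ ω₂ : ℝ) (hω₂ : ω₂ ≠ 0)
    (hirr : Irrational (ω₁ / ω₂)) (m n m' n' : ℤ)
    (h1 : (m, n) ≠ (m', n')) (h2 : (m, n) ≠ (-m', -n')) :
    Tendsto (fun T : ℝ =>
        (2 / T) * ∫ t in (0:ℝ)..T,
          Real.sin (((m : ℝ) * ω₁ + (n : ℝ) * ω₂) * t) *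
            Real.sin (((m' : ℝ) * ω₁ + (n' : ℝ) * ω₂) * t))
      atTop (nhds 0) := by
  set a : ℝ := (m : ℝ) * ω₁ + (n : ℝ) * ω₂ with ha
  set b : ℝ := (m' : ℝ) * ω₁ + (n' : ℝ) * ω₂ with hb
  have hc₁ : a - b ≠ 0 := by
    have hne : ((m - m' : ℤ), (n - n' : ℤ)) ≠ (0, 0) := by
      intro h; apply h1
      rw [Prod.mk.injEq] at h ⊢
      omega
    have := aux_ne ω₁ ω₂ hω₂ hirr (m - m') (n - n') hne
    rw [ha, hb]
    push_cast at this ⊢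
    intro h; exact this (by linarith)
  have hc₂ : a + b ≠ 0 := by
    have hne : ((m + m' : ℤ), (n + n' : ℤ)) ≠ (0, 0) := by
      intro h; apply h2
      rw [Prod.mk.injEq] at h ⊢
      omega
    have := aux_ne ω₁ ω₂ hω₂ hirr (m + m') (n + n') hne
    rw [ha, hb]
    push_cast at this ⊢
    intro h; exact this (by linarith)
  have key : ∀ T : ℝ, (2 / T) * (∫ t in (0:ℝ)..T, Real.sin (a * t) * Real.sin (b * t))
      = (1 / T) * (∫ t in (0:ℝ)..T, Real.cos ((a - b) * t))
        - (1 / T) * (∫ t in (0:ℝ)..T, Real.cos ((a + b) * t)) := by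
    intro T
    have hpt : ∀ t : ℝ, Real.sin (a * t) * Real.sin (b * t)
        = (Real.cos ((a - b) * t) - Real.cos ((a + b) * t)) / 2 := by
      intro t
      rw [sin_mul_sin_eq, ← sub_mul, ← add_mul]
    simp only [hpt]
    rw [intervalIntegral.integral_div, intervalIntegral.integral_sub
      ((by fun_prop : Continuous fun x : ℝ => Real.cos ((a - b) * x)).intervalIntegrable _ _)
      ((by fun_prop : Continuous fun x : ℝ => Real.cos ((a + b) * x)).intervalIntegrable _ _)]
    ring
  simp only [key]
  simpa using (aux_tendsto (a - b) hc₁).sub (aux_tendsto (a + b) hc₂)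
end

section
/- Fix a real g > 0 and positive integers a, b; set ω₁ = a·g, ω₂ = b·g, T = 2π/g, and for a positive integer M let t_i = T(i−1)/M for i = 1, …, M. Let p be a positive integer, assume M > 2p·max(a, b), and let m, n, m′, n′ be integers with |m| + |n| ≤ p, |m′| + |n′| ≤ p and |m·a + n·b| ≠ |m′·a + n′·b|. Then both (2/M)·∑_{i=1}^{M} cos((m ω₁ + n ω₂) t_i)·cos((m′ ω₁ + n′ ω₂) t_i) = 0 and (2/M)·∑_{i=1}^{M} sin((m ω₁ + n ω₂) t_i)·sin((m′ ω₁ + n′ ω₂) t_i) = 0. -/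
/-!
At the node `t_i` the harmonic `k = m a + n b` has phase `2π k (i-1)/M`, so by the
product-to-sum formulas both Galerkin products reduce to sums of `cos (2π d j / M)` over a
full period `j < M`, with `d = k ∓ k'`. Such a sum is the real part of a geometric sum of
the `M`-th root of unity `exp (2π I d / M)`, hence vanishes unless `M ∣ d`. Since
`|k|, |k'| ≤ p max(a, b)` and `2 p max(a, b) < M`, this can only happen for `d = 0`, which
`|k| ≠ |k'|` excludes.
-/

open Real Finset

lemma sum_range_cos_two_pi_mul_div_eq_zero {M : ℕ} {k : ℤ} (hk : ¬ (M : ℤ) ∣ k) :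
    ∑ j ∈ range M, cos (2 * π * k * j / M) = 0 := by
  rcases Nat.eq_zero_or_pos M with rfl | hM
  · simp
  have hMc : (M : ℂ) ≠ 0 := by exact_mod_cast hM.ne'
  set ζ : ℂ := Complex.exp (2 * π * Complex.I * k / M)
  have hζ_ne_one : ζ ≠ 1 := by
    rw [Ne, Complex.exp_eq_one_iff]
    rintro ⟨q, hq⟩
    refine hk ⟨q, ?_⟩
    field_simp at hq
    exact_mod_cast hq
  have hζ_pow : ζ ^ M = 1 := by
    rw [← Complex.exp_nat_mul, mul_div_cancel₀ _ hMc, mul_comm]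
    exact Complex.exp_int_mul_two_pi_mul_I k
  have hre (j : ℕ) : cos (2 * π * k * j / M) = (ζ ^ j).re := by
    rw [← Complex.exp_nat_mul, ← Complex.exp_ofReal_mul_I_re]
    push_cast
    ring_nf
  simp only [hre, ← Complex.re_sum, geom_sum_eq hζ_ne_one, hζ_pow, sub_self, zero_div,
    Complex.zero_re]

section ProductToSum

variable {M : ℕ} {k l : ℤ}

lemma sum_range_cos_mul_cos_eq_zero (h₁ : ¬ (M : ℤ) ∣ k - l) (h₂ : ¬ (M : ℤ) ∣ k + l) :
    ∑ j ∈ range M, cos (2 * π * k * j / M) * cos (2 * π * l * j / M) = 0 := by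
  have hprod (j : ℕ) : cos (2 * π * k * j / M) * cos (2 * π * l * j / M) =
      (cos (2 * π * ↑(k - l) * j / M) + cos (2 * π * ↑(k + l) * j / M)) / 2 := by
    rw [eq_div_iff two_ne_zero, mul_comm, ← mul_assoc, two_mul_cos_mul_cos]
    push_cast
    ring_nf
  simp only [hprod, ← sum_div, sum_add_distrib, sum_range_cos_two_pi_mul_div_eq_zero h₁,
    sum_range_cos_two_pi_mul_div_eq_zero h₂, add_zero, zero_div]

lemma sum_range_sin_mul_sin_eq_zero (h₁ : ¬ (M : ℤ) ∣ k - l) (h₂ : ¬ (M : ℤ) ∣ k + l) :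
    ∑ j ∈ range M, sin (2 * π * k * j / M) * sin (2 * π * l * j / M) = 0 := by
  have hprod (j : ℕ) : sin (2 * π * k * j / M) * sin (2 * π * l * j / M) =
      (cos (2 * π * ↑(k - l) * j / M) - cos (2 * π * ↑(k + l) * j / M)) / 2 := by
    rw [eq_div_iff two_ne_zero, mul_comm, ← mul_assoc, two_mul_sin_mul_sin]
    push_cast
    ring_nf
  simp only [hprod, ← sum_div, sum_sub_distrib, sum_range_cos_two_pi_mul_div_eq_zero h₁,
    sum_range_cos_two_pi_mul_div_eq_zero h₂, sub_zero, zero_div]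

end ProductToSum

lemma abs_mul_add_mul_le (m n : ℤ) (a b : ℕ) :
    |m * (a : ℤ) + n * b| ≤ (m.natAbs + n.natAbs : ℕ) * (max a b : ℕ) := by
  have ha : (a : ℤ) ≤ (max a b : ℕ) := by exact_mod_cast le_max_left a b
  have hb : (b : ℤ) ≤ (max a b : ℕ) := by exact_mod_cast le_max_right a b
  calc |m * (a : ℤ) + n * b| ≤ |m| * a + |n| * b := by
        simpa only [abs_mul, Nat.abs_cast] using abs_add_le (m * (a : ℤ)) (n * b)
    _ ≤ |m| * (max a b : ℕ) + |n| * (max a b : ℕ) := by gcongr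
    _ = (m.natAbs + n.natAbs : ℕ) * (max a b : ℕ) := by push_cast; ring

lemma sum_Icc_one_eq_sum_range {β : Type*} [AddCommMonoid β] (f : ℕ → β) (M : ℕ) :
    ∑ i ∈ Icc 1 M, f i = ∑ j ∈ range M, f (j + 1) := by
  rw [range_eq_Ico, ← Ico_add_one_right_eq_Icc, sum_Ico_add']

theorem RMHB_discrete_offdiag_vanish_general (g : ℝ) (hg : 0 < g) (a b : ℕ)
    (p M : ℕ)
    (hM : 2 * p * max a b < M)
    (m n m' n' : ℤ) (hmn : m.natAbs + n.natAbs ≤ p) (hmn' : m'.natAbs + n'.natAbs ≤ p)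
    (hne : |m * (a : ℤ) + n * (b : ℤ)| ≠ |m' * (a : ℤ) + n' * (b : ℤ)|) :
    (2 / (M : ℝ)) * ∑ i ∈ Finset.Icc 1 M,
        Real.cos (((m : ℝ) * ((a : ℝ) * g) + (n : ℝ) * ((b : ℝ) * g)) *
            ((2 * π / g) * ((i : ℝ) - 1) / M)) *
          Real.cos (((m' : ℝ) * ((a : ℝ) * g) + (n' : ℝ) * ((b : ℝ) * g)) *
            ((2 * π / g) * ((i : ℝ) - 1) / M)) = 0 ∧
    (2 / (M : ℝ)) * ∑ i ∈ Finset.Icc 1 M,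
        Real.sin (((m : ℝ) * ((a : ℝ) * g) + (n : ℝ) * ((b : ℝ) * g)) *
            ((2 * π / g) * ((i : ℝ) - 1) / M)) *
          Real.sin (((m' : ℝ) * ((a : ℝ) * g) + (n' : ℝ) * ((b : ℝ) * g)) *
            ((2 * π / g) * ((i : ℝ) - 1) / M)) = 0 := by
  set k : ℤ := m * a + n * b
  set l : ℤ := m' * a + n' * b
  have hk : |k| ≤ p * (max a b : ℕ) :=
    (abs_mul_add_mul_le m n a b).trans (by gcongr)
  have hl : |l| ≤ p * (max a b : ℕ) :=
    (abs_mul_add_mul_le m' n' a b).trans (by gcongr)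
  have hM' : 2 * p * ((max a b : ℕ) : ℤ) < M := by exact_mod_cast hM
  have h₁ : ¬ (M : ℤ) ∣ k - l := fun h => hne <| by
    rw [sub_eq_zero.mp (Int.eq_zero_of_abs_lt_dvd h (by linarith [abs_sub k l]))]
  have h₂ : ¬ (M : ℤ) ∣ k + l := fun h => hne <| by
    rw [eq_neg_of_add_eq_zero_left (Int.eq_zero_of_abs_lt_dvd h (by linarith [abs_add_le k l])),
      abs_neg]
  have hangle (μ ν : ℤ) (x : ℝ) : (μ * (a * g) + ν * (b * g)) * (2 * π / g * x / M) =
      2 * π * ↑(μ * a + ν * b) * x / M := by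
    push_cast
    field_simp
  simp only [sum_Icc_one_eq_sum_range, Nat.cast_add_one, add_sub_cancel_right, hangle]
  rw [sum_range_cos_mul_cos_eq_zero h₁ h₂, sum_range_sin_mul_sin_eq_zero h₁ h₂]
  exact ⟨mul_zero _, mul_zero _⟩

/-- Theorem 2, condition (a), off-diagonal part: with `ω₁ = a g`, `ω₂ = b g`,
sampling period `T = 2π/g`, nodes `t_i = T(i-1)/M`, truncation order `p`, and
`M > 2 p max(a,b)`, the discrete Galerkin products between two truncation
harmonics of different absolute frequency vanish exactly. -/
theorem RMHB_discrete_offdiag_vanish (g : ℝ) (hg : 0 < g) (a b : ℕ)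
    (ha : 0 < a) (hb : 0 < b) (p M : ℕ) (hp : 0 < p)
    (hM : 2 * p * max a b < M)
    (m n m' n' : ℤ) (hmn : m.natAbs + n.natAbs ≤ p) (hmn' : m'.natAbs + n'.natAbs ≤ p)
    (hne : |m * (a : ℤ) + n * (b : ℤ)| ≠ |m' * (a : ℤ) + n' * (b : ℤ)|) :
    (2 / (M : ℝ)) * ∑ i ∈ Finset.Icc 1 M,
        Real.cos (((m : ℝ) * ((a : ℝ) * g) + (n : ℝ) * ((b : ℝ) * g)) *
            ((2 * π / g) * ((i : ℝ) - 1) / M)) *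
          Real.cos (((m' : ℝ) * ((a : ℝ) * g) + (n' : ℝ) * ((b : ℝ) * g)) *
            ((2 * π / g) * ((i : ℝ) - 1) / M)) = 0 ∧
    (2 / (M : ℝ)) * ∑ i ∈ Finset.Icc 1 M,
        Real.sin (((m : ℝ) * ((a : ℝ) * g) + (n : ℝ) * ((b : ℝ) * g)) *
            ((2 * π / g) * ((i : ℝ) - 1) / M)) *
          Real.sin (((m' : ℝ) * ((a : ℝ) * g) + (n' : ℝ) * ((b : ℝ) * g)) *
            ((2 * π / g) * ((i : ℝ) - 1) / M)) = 0 :=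
  RMHB_discrete_offdiag_vanish_general g hg a b p M hM m n m' n' hmn hmn' hne
end

section
/- Fix a real g > 0 and positive integers a, b; set ω₁ = a·g, ω₂ = b·g, T = 2π/g, and for a positive integer M let t_i = T(i−1)/M for i = 1, …, M. Let p and φ be positive integers, assume M > (φ+1)·p·max(a, b), and let m, n, m′, n′ be integers with |m| + |n| ≤ p, |m′| + |n′| ≤ φ·p and |m·a + n·b| ≠ |m′·a + n′·b|. Then each of the sums ∑_{i=1}^{M} cos((m ω₁ + n ω₂) t_i)·cos((m′ ω₁ + n′ ω₂) t_i), ∑_{i=1}^{M} sin((m ω₁ + n ω₂) t_i)·sin((m′ ω₁ + n′ ω₂) t_i), and ∑_{i=1}^{M} sin((m ω₁ + n ω₂) t_i)·cos((m′ ω₁ + n′ ω₂) t_i) equals 0. -/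
open Real


-- geometric sum of exponentials vanishes when M does not divide K
lemma sum_exp_vanish (M : ℕ) (K : ℤ) (h : ¬ (M:ℤ) ∣ K) :
    ∑ j ∈ Finset.range M, Complex.exp ((2 * (π:ℂ) * K * j / M) * Complex.I) = 0 := by
  rcases Nat.eq_zero_or_pos M with hM | hM
  · subst hM; simp
  have hMne : (M:ℂ) ≠ 0 := by exact_mod_cast hM.ne'
  set ζ : ℂ := Complex.exp ((2 * (π:ℂ) * K / M) * Complex.I) with hζdef
  have hζ1 : ζ ≠ 1 := by
    intro hζ
    rw [hζdef, Complex.exp_eq_one_iff] at hζ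
    obtain ⟨c, hc⟩ := hζ
    apply h
    have h2 : (2 * (π:ℂ) * Complex.I) ≠ 0 := by
      simp [Real.pi_ne_zero, Complex.I_ne_zero, Complex.ofReal_ne_zero]
    have : ((K:ℂ)/M) * (2 * (π:ℂ) * Complex.I) = (c:ℂ) * (2 * (π:ℂ) * Complex.I) := by
      rw [← hc]; ring
    have hKM : (K:ℂ)/M = (c:ℂ) := mul_right_cancel₀ h2 this
    have : (K:ℂ) = (c:ℂ) * M := by
      field_simp at hKM; linear_combination hKM
    have : K = c * M := by exact_mod_cast this
    exact ⟨c, by linarith⟩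
  have hterm : ∀ j ∈ Finset.range M,
      Complex.exp ((2 * (π:ℂ) * K * j / M) * Complex.I) = ζ ^ j := by
    intro j _
    rw [hζdef, ← Complex.exp_nat_mul]
    congr 1
    ring
  rw [Finset.sum_congr rfl hterm, geom_sum_eq hζ1]
  have hζM : ζ ^ M = 1 := by
    rw [hζdef, ← Complex.exp_nat_mul]
    have : (M:ℂ) * (2 * (π:ℂ) * K / M * Complex.I) = (K:ℂ) * (2 * (π:ℂ) * Complex.I) := by
      field_simp
    rw [this, Complex.exp_int_mul_two_pi_mul_I]
  rw [hζM]; simp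

lemma sum_cos_vanish (M : ℕ) (K : ℤ) (h : ¬ (M:ℤ) ∣ K) :
    ∑ j ∈ Finset.range M, Real.cos (2 * π * K * j / M) = 0 := by
  have := sum_exp_vanish M K h
  have hre : ∑ j ∈ Finset.range M, Real.cos (2 * π * K * j / M)
      = (∑ j ∈ Finset.range M, Complex.exp ((2 * (π:ℂ) * K * j / M) * Complex.I)).re := by
    rw [Complex.re_sum]
    refine Finset.sum_congr rfl fun j _ => ?_
    have : (2 * (π:ℂ) * K * j / M) = ((2 * π * K * j / M : ℝ) : ℂ) := by push_cast; ring
    rw [this, Complex.exp_ofReal_mul_I_re]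
  rw [hre, this]; simp

lemma sum_sin_vanish (M : ℕ) (K : ℤ) (h : ¬ (M:ℤ) ∣ K) :
    ∑ j ∈ Finset.range M, Real.sin (2 * π * K * j / M) = 0 := by
  have := sum_exp_vanish M K h
  have him : ∑ j ∈ Finset.range M, Real.sin (2 * π * K * j / M)
      = (∑ j ∈ Finset.range M, Complex.exp ((2 * (π:ℂ) * K * j / M) * Complex.I)).im := by
    rw [Complex.im_sum]
    refine Finset.sum_congr rfl fun j _ => ?_
    have : (2 * (π:ℂ) * K * j / M) = ((2 * π * K * j / M : ℝ) : ℂ) := by push_cast; ring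
    rw [this, Complex.exp_ofReal_mul_I_im]
  rw [him, this]; simp

/-- Theorem 2, condition (b): with `ω₁ = a g`, `ω₂ = b g`, sampling period
`T = 2π/g`, nodes `t_i = T(i-1)/M`, truncation order `p`, nonlinearity degree `φ`,
and `M > (φ+1) p max(a,b)`, the discrete pairings between a retained truncation
harmonic (`|m|+|n| ≤ p`) and a higher harmonic (`|m'|+|n'| ≤ φ p`) of different
absolute frequency vanish exactly. -/
theorem RMHB_aliasing_matrix_vanish (g : ℝ) (hg : 0 < g) (a b : ℕ)
    (ha : 0 < a) (hb : 0 < b) (p φ M : ℕ) (hp : 0 < p) (hφ : 0 < φ)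
    (hM : (φ + 1) * p * max a b < M)
    (m n m' n' : ℤ) (hmn : m.natAbs + n.natAbs ≤ p)
    (hmn' : m'.natAbs + n'.natAbs ≤ φ * p)
    (hne : |m * (a : ℤ) + n * (b : ℤ)| ≠ |m' * (a : ℤ) + n' * (b : ℤ)|) :
    (∑ i ∈ Finset.Icc 1 M,
        Real.cos (((m : ℝ) * ((a : ℝ) * g) + (n : ℝ) * ((b : ℝ) * g)) *
            ((2 * π / g) * ((i : ℝ) - 1) / M)) *
          Real.cos (((m' : ℝ) * ((a : ℝ) * g) + (n' : ℝ) * ((b : ℝ) * g)) *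
            ((2 * π / g) * ((i : ℝ) - 1) / M)) = 0) ∧
    (∑ i ∈ Finset.Icc 1 M,
        Real.sin (((m : ℝ) * ((a : ℝ) * g) + (n : ℝ) * ((b : ℝ) * g)) *
            ((2 * π / g) * ((i : ℝ) - 1) / M)) *
          Real.sin (((m' : ℝ) * ((a : ℝ) * g) + (n' : ℝ) * ((b : ℝ) * g)) *
            ((2 * π / g) * ((i : ℝ) - 1) / M)) = 0) ∧
    (∑ i ∈ Finset.Icc 1 M,
        Real.sin (((m : ℝ) * ((a : ℝ) * g) + (n : ℝ) * ((b : ℝ) * g)) *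
            ((2 * π / g) * ((i : ℝ) - 1) / M)) *
          Real.cos (((m' : ℝ) * ((a : ℝ) * g) + (n' : ℝ) * ((b : ℝ) * g)) *
            ((2 * π / g) * ((i : ℝ) - 1) / M)) = 0) := by
  have hM0 : 0 < M := lt_of_le_of_lt (Nat.zero_le _) hM
  have hMR : (M:ℝ) ≠ 0 := by exact_mod_cast hM0.ne'
  have hgne : g ≠ 0 := hg.ne'
  set k : ℤ := m * (a:ℤ) + n * (b:ℤ) with hk
  set k' : ℤ := m' * (a:ℤ) + n' * (b:ℤ) with hk'
  -- bounds on |k|, |k'|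
  have hbound : ∀ (x y : ℤ) (q : ℕ), x.natAbs + y.natAbs ≤ q →
      |x * (a:ℤ) + y * (b:ℤ)| ≤ (q:ℤ) * max a b := by
    intro x y q hq
    have hax : (a:ℤ) ≤ (max a b : ℕ) := by exact_mod_cast le_max_left a b
    have hbx : (b:ℤ) ≤ (max a b : ℕ) := by exact_mod_cast le_max_right a b
    have hxq : |x| + |y| ≤ (q:ℤ) := by
      rw [Int.abs_eq_natAbs, Int.abs_eq_natAbs]; exact_mod_cast hq
    calc |x * (a:ℤ) + y * (b:ℤ)| ≤ |x * (a:ℤ)| + |y * (b:ℤ)| := abs_add_le _ _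
      _ = |x| * a + |y| * b := by
          rw [abs_mul, abs_mul, abs_of_nonneg (by positivity : (0:ℤ) ≤ (a:ℤ)),
            abs_of_nonneg (by positivity : (0:ℤ) ≤ (b:ℤ))]
      _ ≤ (q:ℤ) * max a b := by nlinarith [abs_nonneg x, abs_nonneg y]
  have hkb : |k| ≤ (p:ℤ) * max a b := hbound m n p hmn
  have hkb' : |k'| ≤ ((φ*p : ℕ):ℤ) * max a b := hbound m' n' (φ*p) hmn'
  have hdvd : ∀ K : ℤ, K ≠ 0 → |K| ≤ (((φ+1)*p*max a b : ℕ):ℤ) → ¬ (M:ℤ) ∣ K := by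
    intro K h0 hle hd
    exact h0 (Int.eq_zero_of_abs_lt_dvd hd (lt_of_le_of_lt hle (by exact_mod_cast hM)))
  have hsum : |k + k'| ≤ (((φ+1)*p*max a b : ℕ):ℤ) := by
    calc |k + k'| ≤ |k| + |k'| := abs_add_le _ _
      _ ≤ (((φ+1)*p*max a b : ℕ):ℤ) := by push_cast at hkb hkb' ⊢; nlinarith
  have hdiff : |k - k'| ≤ (((φ+1)*p*max a b : ℕ):ℤ) := by
    calc |k - k'| ≤ |k| + |k'| := abs_sub _ _
      _ ≤ (((φ+1)*p*max a b : ℕ):ℤ) := by push_cast at hkb hkb' ⊢; nlinarith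
  have hne1 : k + k' ≠ 0 := fun h => hne (by rw [show k = -k' by linarith, abs_neg])
  have hne2 : k - k' ≠ 0 := fun h => hne (by rw [show k = k' by linarith])
  have hd1 : ¬ (M:ℤ) ∣ (k + k') := hdvd _ hne1 hsum
  have hd2 : ¬ (M:ℤ) ∣ (k - k') := hdvd _ hne2 hdiff
  have hcc := sum_cos_vanish M (k + k') hd1
  have hcd := sum_cos_vanish M (k - k') hd2
  have hsc := sum_sin_vanish M (k + k') hd1
  have hsd := sum_sin_vanish M (k - k') hd2
  -- rewrite arguments
  have hE : ∀ (x y : ℤ) (i : ℕ), ((x:ℝ) * ((a:ℝ)*g) + (y:ℝ) * ((b:ℝ)*g)) *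
      ((2*π/g) * ((i:ℝ) - 1) / M) = 2*π*(((x*(a:ℤ)+y*(b:ℤ)):ℤ):ℝ)*((i:ℝ)-1)/M := by
    intro x y i
    push_cast
    field_simp
  have hreindex : ∀ f : ℕ → ℝ, ∑ i ∈ Finset.Icc 1 M, f i = ∑ j ∈ Finset.range M, f (1+j) := by
    intro f
    rw [← Finset.Ico_add_one_right_eq_Icc, Finset.sum_Ico_eq_sum_range]
    simp
  have hargA : ∀ j : ℕ, 2*π*((k:ℤ):ℝ)*(((1+j:ℕ):ℝ)-1)/M + 2*π*((k':ℤ):ℝ)*(((1+j:ℕ):ℝ)-1)/M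
      = 2*π*(((k+k'):ℤ):ℝ)*(j:ℝ)/M := by intro j; push_cast; ring
  have hargB : ∀ j : ℕ, 2*π*((k:ℤ):ℝ)*(((1+j:ℕ):ℝ)-1)/M - 2*π*((k':ℤ):ℝ)*(((1+j:ℕ):ℝ)-1)/M
      = 2*π*(((k-k'):ℤ):ℝ)*(j:ℝ)/M := by intro j; push_cast; ring
  refine ⟨?_, ?_, ?_⟩
  · rw [hreindex]
    have : ∀ j ∈ Finset.range M,
        Real.cos (((m:ℝ)*((a:ℝ)*g) + (n:ℝ)*((b:ℝ)*g)) * ((2*π/g)*(((1+j:ℕ):ℝ)-1)/M)) *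
        Real.cos (((m':ℝ)*((a:ℝ)*g) + (n':ℝ)*((b:ℝ)*g)) * ((2*π/g)*(((1+j:ℕ):ℝ)-1)/M))
        = (Real.cos (2*π*(((k+k'):ℤ):ℝ)*(j:ℝ)/M) + Real.cos (2*π*(((k-k'):ℤ):ℝ)*(j:ℝ)/M))/2 := by
      intro j _
      rw [hE m n, hE m' n', ← hk, ← hk', ← hargA j, ← hargB j]
      set X := 2*π*((k:ℤ):ℝ)*(((1+j:ℕ):ℝ)-1)/M
      set Y := 2*π*((k':ℤ):ℝ)*(((1+j:ℕ):ℝ)-1)/M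
      have := Real.cos_add X Y
      have := Real.cos_sub X Y
      linarith
    rw [Finset.sum_congr rfl this, ← Finset.sum_div, Finset.sum_add_distrib, hcc, hcd]
    norm_num
  · rw [hreindex]
    have : ∀ j ∈ Finset.range M,
        Real.sin (((m:ℝ)*((a:ℝ)*g) + (n:ℝ)*((b:ℝ)*g)) * ((2*π/g)*(((1+j:ℕ):ℝ)-1)/M)) *
        Real.sin (((m':ℝ)*((a:ℝ)*g) + (n':ℝ)*((b:ℝ)*g)) * ((2*π/g)*(((1+j:ℕ):ℝ)-1)/M))
        = (Real.cos (2*π*(((k-k'):ℤ):ℝ)*(j:ℝ)/M) - Real.cos (2*π*(((k+k'):ℤ):ℝ)*(j:ℝ)/M))/2 := by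
      intro j _
      rw [hE m n, hE m' n', ← hk, ← hk', ← hargA j, ← hargB j]
      set X := 2*π*((k:ℤ):ℝ)*(((1+j:ℕ):ℝ)-1)/M
      set Y := 2*π*((k':ℤ):ℝ)*(((1+j:ℕ):ℝ)-1)/M
      have := Real.cos_add X Y
      have := Real.cos_sub X Y
      linarith
    rw [Finset.sum_congr rfl this, ← Finset.sum_div, Finset.sum_sub_distrib, hcc, hcd]
    norm_num
  · rw [hreindex]
    have : ∀ j ∈ Finset.range M,
        Real.sin (((m:ℝ)*((a:ℝ)*g) + (n:ℝ)*((b:ℝ)*g)) * ((2*π/g)*(((1+j:ℕ):ℝ)-1)/M)) *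
        Real.cos (((m':ℝ)*((a:ℝ)*g) + (n':ℝ)*((b:ℝ)*g)) * ((2*π/g)*(((1+j:ℕ):ℝ)-1)/M))
        = (Real.sin (2*π*(((k+k'):ℤ):ℝ)*(j:ℝ)/M) + Real.sin (2*π*(((k-k'):ℤ):ℝ)*(j:ℝ)/M))/2 := by
      intro j _
      rw [hE m n, hE m' n', ← hk, ← hk', ← hargA j, ← hargB j]
      set X := 2*π*((k:ℤ):ℝ)*(((1+j:ℕ):ℝ)-1)/M
      set Y := 2*π*((k':ℤ):ℝ)*(((1+j:ℕ):ℝ)-1)/M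
      have := Real.sin_add X Y
      have := Real.sin_sub X Y
      linarith
    rw [Finset.sum_congr rfl this, ← Finset.sum_div, Finset.sum_add_distrib, hsc, hsd]
    norm_num
end

section
/- Let K, L and M be positive integers, k₁, …, k_K pairwise distinct positive integers, and k′₁, …, k′_L positive integers such that k′_l ≠ k_j for all j, l and M > max_j(k_j) + max_l(k′_l). Define the (2K+1) × M real matrix E* by E*_{0,i} = 1/M, E*_{2j−1,i} = (2/M)·cos(2π k_j i / M), E*_{2j,i} = (2/M)·sin(2π k_j i / M), and the M × 2L real matrix E₁ by (E₁)_{i,2l−1} = cos(2π k′_l i / M), (E₁)_{i,2l} = sin(2π k′_l i / M), for i = 1, …, M. Then the matrix product E* E₁ is the zero matrix. -/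
open Real

lemma sum_exp_aux (M : ℕ) (hM : 0 < M) (n : ℤ) (hn : ¬ (M:ℤ) ∣ n) :
    ∑ i : Fin M, Complex.exp (((2*π*(n:ℝ)*((i:ℕ)+1)/M : ℝ) : ℂ) * Complex.I) = 0 := by
  have hMC : (M:ℂ) ≠ 0 := by exact_mod_cast hM.ne'
  set z : ℂ := Complex.exp (((2*π*(n:ℝ)/M : ℝ) : ℂ) * Complex.I) with hzdef
  have hz1 : z ≠ 1 := by
    intro h
    rw [hzdef, Complex.exp_eq_one_iff] at h
    obtain ⟨m, hm⟩ := h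
    have hm' : ((2*π*(n:ℝ)/M : ℝ) : ℂ) = ((m:ℝ) * (2*π) : ℝ) := by
      have := mul_right_cancel₀ Complex.I_ne_zero (hm.trans (by ring : (m:ℂ) * (2*π*Complex.I) = ((m:ℂ)*(2*π)) * Complex.I))
      rw [this]; push_cast; ring
    have hr : 2*π*(n:ℝ)/M = (m:ℝ)*(2*π) := by exact_mod_cast hm'
    have hMR : (M:ℝ) ≠ 0 := by exact_mod_cast hM.ne'
    have : (n:ℝ) = (m:ℝ) * (M:ℝ) := by
      field_simp at hr
      nlinarith [Real.pi_pos]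
    have hz : n = m * M := by exact_mod_cast this
    exact hn ⟨m, by rw [hz]; ring⟩
  have hzM : z ^ M = 1 := by
    rw [hzdef, ← Complex.exp_nat_mul]
    have : (M:ℂ) * (((2*π*(n:ℝ)/M : ℝ) : ℂ) * Complex.I) = (n:ℂ) * (2*π*Complex.I) := by
      push_cast; field_simp
    rw [this, Complex.exp_int_mul_two_pi_mul_I]
  have hterm : ∀ i : Fin M,
      Complex.exp (((2*π*(n:ℝ)*((i:ℕ)+1)/M : ℝ) : ℂ) * Complex.I) = z ^ ((i:ℕ)+1) := by
    intro i
    rw [hzdef, ← Complex.exp_nat_mul]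
    congr 1
    push_cast; ring
  simp_rw [hterm]
  have : ∑ i : Fin M, z ^ ((i:ℕ)+1) = ∑ i ∈ Finset.range M, z ^ (i+1) :=
    Fin.sum_univ_eq_sum_range (fun i => z ^ (i+1)) M
  rw [this]
  simp_rw [pow_succ]
  rw [← Finset.sum_mul, geom_sum_eq hz1, hzM]
  simp

lemma sum_cos_aux (M : ℕ) (hM : 0 < M) (n : ℤ) (hn : ¬ (M:ℤ) ∣ n) :
    ∑ i : Fin M, Real.cos (2*π*(n:ℝ)*((i:ℕ)+1)/M) = 0 := by
  have h := congrArg Complex.re (sum_exp_aux M hM n hn)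
  simp only [Complex.re_sum, Complex.exp_ofReal_mul_I_re, Complex.zero_re] at h
  exact h

lemma sum_sin_aux (M : ℕ) (hM : 0 < M) (n : ℤ) (hn : ¬ (M:ℤ) ∣ n) :
    ∑ i : Fin M, Real.sin (2*π*(n:ℝ)*((i:ℕ)+1)/M) = 0 := by
  have h := congrArg Complex.im (sum_exp_aux M hM n hn)
  simp only [Complex.im_sum, Complex.exp_ofReal_mul_I_im, Complex.zero_im] at h
  exact h

lemma not_dvd_aux (M : ℕ) (n : ℤ) (h0 : n ≠ 0) (h : -(M:ℤ) < n) (h' : n < M) : ¬ (M:ℤ) ∣ n := by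
  intro hd
  have habs : (M:ℤ) ∣ |n| := (dvd_abs _ _).mpr hd
  have := Int.le_of_dvd (abs_pos.mpr h0) habs
  rcases abs_cases n with ⟨he, _⟩ | ⟨he, _⟩ <;> omega

/-- Condition (b) of Theorem 2 in matrix form: let `k₁, …, k_K` be pairwise
distinct positive integers (the retained harmonics) and `k′₁, …, k′_L` positive
integers (the higher harmonics generated by the nonlinearity) with `k′_l ≠ k_j`
for all `j, l` and `M > max_j k_j + max_l k′_l`.  `Estar` is the transformation
(discrete Fourier analysis) matrix at the nodes `θ_i = 2πi/M`, `i = 1, …, M`,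
and `E₁` the collocation matrix of the higher harmonics; then the aliasing
matrix `Estar * E₁` is zero.  (Basis indices are encoded as `Unit ⊕ Fin K × Bool`
resp. `Fin L × Bool`, with `false` for cosine and `true` for sine.) -/
theorem aliasing_matrix_eq_zero (K L M : ℕ) (hK : 0 < K) (hL : 0 < L) (hM0 : 0 < M)
    (k : Fin K → ℕ) (k' : Fin L → ℕ)
    (hkpos : ∀ j, 0 < k j) (hkinj : Function.Injective k)
    (hk'pos : ∀ l, 0 < k' l) (hk'ne : ∀ (j : Fin K) (l : Fin L), k' l ≠ k j)
    (hM : Finset.univ.sup k + Finset.univ.sup k' < M)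
    (Estar : Matrix (Unit ⊕ Fin K × Bool) (Fin M) ℝ)
    (E₁ : Matrix (Fin M) (Fin L × Bool) ℝ)
    (hS0 : ∀ (i : Fin M) (u : Unit), Estar (Sum.inl u) i = 1 / (M : ℝ))
    (hSc : ∀ (i : Fin M) (j : Fin K),
      Estar (Sum.inr (j, false)) i = (2 / (M : ℝ)) * Real.cos (2 * π * (k j : ℝ) * ((i : ℕ) + 1) / M))
    (hSs : ∀ (i : Fin M) (j : Fin K),
      Estar (Sum.inr (j, true)) i = (2 / (M : ℝ)) * Real.sin (2 * π * (k j : ℝ) * ((i : ℕ) + 1) / M))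
    (hE1c : ∀ (i : Fin M) (l : Fin L),
      E₁ i (l, false) = Real.cos (2 * π * (k' l : ℝ) * ((i : ℕ) + 1) / M))
    (hE1s : ∀ (i : Fin M) (l : Fin L),
      E₁ i (l, true) = Real.sin (2 * π * (k' l : ℝ) * ((i : ℕ) + 1) / M)) :
    Estar * E₁ = 0 := by
  ext r c
  obtain ⟨l, b'⟩ := c
  have hla : k' l ≤ Finset.univ.sup k' := Finset.le_sup (Finset.mem_univ l)
  have hlp := hk'pos l
  rw [Matrix.mul_apply, Matrix.zero_apply]
  rcases r with u | ⟨j, b⟩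
  · -- first row
    have hd : ¬ (M:ℤ) ∣ ((k' l : ℕ) : ℤ) := by
      apply not_dvd_aux <;> omega
    rcases b' with _ | _
    · have h := sum_cos_aux M hM0 (k' l) hd
      push_cast at h
      simp_rw [hS0, hE1c, ← Finset.mul_sum]
      rw [h, mul_zero]
    · have h := sum_sin_aux M hM0 (k' l) hd
      push_cast at h
      simp_rw [hS0, hE1s, ← Finset.mul_sum]
      rw [h, mul_zero]
  · -- harmonic rows
    have hja : k j ≤ Finset.univ.sup k := Finset.le_sup (Finset.mem_univ j)
    have hjp := hkpos j
    have hne := hk'ne j l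
    have hd1 : ¬ (M:ℤ) ∣ ((k j : ℤ) - (k' l : ℤ)) := by
      apply not_dvd_aux <;> omega
    have hd2 : ¬ (M:ℤ) ∣ ((k j : ℤ) + (k' l : ℤ)) := by
      apply not_dvd_aux <;> omega
    rcases b with _ | _ <;> rcases b' with _ | _
    · -- cos * cos
      have h1 := sum_cos_aux M hM0 ((k j : ℤ) - (k' l : ℤ)) hd1
      have h2 := sum_cos_aux M hM0 ((k j : ℤ) + (k' l : ℤ)) hd2
      have key : ∀ i : Fin M, Estar (Sum.inr (j, false)) i * E₁ i (l, false) =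
          (1/(M:ℝ)) * Real.cos (2*π*((((k j : ℤ) - (k' l : ℤ)) : ℤ):ℝ)*((i:ℕ)+1)/M)
          + (1/(M:ℝ)) * Real.cos (2*π*((((k j : ℤ) + (k' l : ℤ)) : ℤ):ℝ)*((i:ℕ)+1)/M) := by
        intro i
        rw [hSc, hE1c]
        have e1 : 2*π*((((k j : ℤ) - (k' l : ℤ)) : ℤ):ℝ)*((i:ℕ)+1)/M
            = 2*π*(k j : ℝ)*((i:ℕ)+1)/M - 2*π*(k' l : ℝ)*((i:ℕ)+1)/M := by push_cast; ring
        have e2 : 2*π*((((k j : ℤ) + (k' l : ℤ)) : ℤ):ℝ)*((i:ℕ)+1)/M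
            = 2*π*(k j : ℝ)*((i:ℕ)+1)/M + 2*π*(k' l : ℝ)*((i:ℕ)+1)/M := by push_cast; ring
        rw [e1, e2, Real.cos_sub, Real.cos_add]; ring
      rw [Finset.sum_congr rfl (fun i _ => key i), Finset.sum_add_distrib,
        ← Finset.mul_sum, ← Finset.mul_sum, h1, h2]
      ring
    · -- cos * sin
      have h1 := sum_sin_aux M hM0 ((k j : ℤ) - (k' l : ℤ)) hd1
      have h2 := sum_sin_aux M hM0 ((k j : ℤ) + (k' l : ℤ)) hd2
      have key : ∀ i : Fin M, Estar (Sum.inr (j, false)) i * E₁ i (l, true) =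
          (1/(M:ℝ)) * Real.sin (2*π*((((k j : ℤ) + (k' l : ℤ)) : ℤ):ℝ)*((i:ℕ)+1)/M)
          + (-(1/(M:ℝ))) * Real.sin (2*π*((((k j : ℤ) - (k' l : ℤ)) : ℤ):ℝ)*((i:ℕ)+1)/M) := by
        intro i
        rw [hSc, hE1s]
        have e1 : 2*π*((((k j : ℤ) - (k' l : ℤ)) : ℤ):ℝ)*((i:ℕ)+1)/M
            = 2*π*(k j : ℝ)*((i:ℕ)+1)/M - 2*π*(k' l : ℝ)*((i:ℕ)+1)/M := by push_cast; ring
        have e2 : 2*π*((((k j : ℤ) + (k' l : ℤ)) : ℤ):ℝ)*((i:ℕ)+1)/M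
            = 2*π*(k j : ℝ)*((i:ℕ)+1)/M + 2*π*(k' l : ℝ)*((i:ℕ)+1)/M := by push_cast; ring
        rw [e1, e2, Real.sin_sub, Real.sin_add]; ring
      rw [Finset.sum_congr rfl (fun i _ => key i), Finset.sum_add_distrib,
        ← Finset.mul_sum, ← Finset.mul_sum, h1, h2]
      ring
    · -- sin * cos
      have h1 := sum_sin_aux M hM0 ((k j : ℤ) - (k' l : ℤ)) hd1
      have h2 := sum_sin_aux M hM0 ((k j : ℤ) + (k' l : ℤ)) hd2
      have key : ∀ i : Fin M, Estar (Sum.inr (j, true)) i * E₁ i (l, false) =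
          (1/(M:ℝ)) * Real.sin (2*π*((((k j : ℤ) + (k' l : ℤ)) : ℤ):ℝ)*((i:ℕ)+1)/M)
          + (1/(M:ℝ)) * Real.sin (2*π*((((k j : ℤ) - (k' l : ℤ)) : ℤ):ℝ)*((i:ℕ)+1)/M) := by
        intro i
        rw [hSs, hE1c]
        have e1 : 2*π*((((k j : ℤ) - (k' l : ℤ)) : ℤ):ℝ)*((i:ℕ)+1)/M
            = 2*π*(k j : ℝ)*((i:ℕ)+1)/M - 2*π*(k' l : ℝ)*((i:ℕ)+1)/M := by push_cast; ring
        have e2 : 2*π*((((k j : ℤ) + (k' l : ℤ)) : ℤ):ℝ)*((i:ℕ)+1)/M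
            = 2*π*(k j : ℝ)*((i:ℕ)+1)/M + 2*π*(k' l : ℝ)*((i:ℕ)+1)/M := by push_cast; ring
        rw [e1, e2, Real.sin_sub, Real.sin_add]; ring
      rw [Finset.sum_congr rfl (fun i _ => key i), Finset.sum_add_distrib,
        ← Finset.mul_sum, ← Finset.mul_sum, h1, h2]
      ring
    · -- sin * sin
      have h1 := sum_cos_aux M hM0 ((k j : ℤ) - (k' l : ℤ)) hd1
      have h2 := sum_cos_aux M hM0 ((k j : ℤ) + (k' l : ℤ)) hd2
      have key : ∀ i : Fin M, Estar (Sum.inr (j, true)) i * E₁ i (l, true) =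
          (1/(M:ℝ)) * Real.cos (2*π*((((k j : ℤ) - (k' l : ℤ)) : ℤ):ℝ)*((i:ℕ)+1)/M)
          + (-(1/(M:ℝ))) * Real.cos (2*π*((((k j : ℤ) + (k' l : ℤ)) : ℤ):ℝ)*((i:ℕ)+1)/M) := by
        intro i
        rw [hSs, hE1s]
        have e1 : 2*π*((((k j : ℤ) - (k' l : ℤ)) : ℤ):ℝ)*((i:ℕ)+1)/M
            = 2*π*(k j : ℝ)*((i:ℕ)+1)/M - 2*π*(k' l : ℝ)*((i:ℕ)+1)/M := by push_cast; ring
        have e2 : 2*π*((((k j : ℤ) + (k' l : ℤ)) : ℤ):ℝ)*((i:ℕ)+1)/M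
            = 2*π*(k j : ℝ)*((i:ℕ)+1)/M + 2*π*(k' l : ℝ)*((i:ℕ)+1)/M := by push_cast; ring
        rw [e1, e2, Real.cos_sub, Real.cos_add]; ring
      rw [Finset.sum_congr rfl (fun i _ => key i), Finset.sum_add_distrib,
        ← Finset.mul_sum, ← Finset.mul_sum, h1, h2]
      ring
end
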